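/- arXiv:2308.16640 — 2 statements merged into one kernel-verified Lean document; each statement's English description precedes it below -/
import Mathlib

section
/- The rational solution q_r(x,t) = 2iη ν₂₁* exp(2iη²x - i(2η²)^{2ε-1}t) / (ν₁₁* (4iη⁴x + i(2η²)^{2ε}t + η²)) is the pointwise limit as ξ → 0⁺ of the one-soliton solution q^{[1]}(x,t) (with |ν₁₁| = |ν₂₁|), for each fixed (x,t) where the denominator is nonzero. -/
/-!
Write `z = ξ + iη`; as `|ν₁₁| = |ν₂₁|`, the phase shift is `ϖ = log (z / |z|)`.
Since `e^ϖ = z / |z|` and `e^{-ϖ} = z̄ / |z|`, one gets `cosh (A + ϖ) = (ξ cosh A + iη sinh A) / |z|`,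
so the factor `ξ` in front of the soliton cancels against the `sech`:
`q = (2iη ν̄₂₁ / ν̄₁₁) · e^{2iθ_I} / ((ξ² + η²)(cosh A + iη sinh A / ξ))` with `A = 2θ_R`.
As `A = ξ φ(ξ)` with `φ` continuous, `sinh A / ξ → φ(0)`, and the limit is read off by continuity.
-/

open Complex Real Filter Topology ComplexConjugate

lemma Complex.cosh_add_log (a : ℂ) {w : ℂ} (hw : w ≠ 0) :
    cosh (a + log w) = (exp a * w + exp (-a) * w⁻¹) / 2 := by
  rw [Complex.cosh, neg_add, exp_add, exp_add, exp_neg (log w), exp_log hw]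

lemma Complex.cosh_add_log_div_norm (A : ℝ) {z : ℂ} (hz : z ≠ 0) :
    cosh (A + log (z / ‖z‖)) = (z.re * Real.cosh A + I * z.im * Real.sinh A) / ‖z‖ := by
  have hn : (‖z‖ : ℂ) ≠ 0 := by exact_mod_cast norm_ne_zero_iff.mpr hz
  have hinv : (z / ‖z‖)⁻¹ = conj z / ‖z‖ := by
    rw [inv_div, div_eq_div_iff hz hn, mul_comm (conj z), mul_conj', sq]
  rw [cosh_add_log _ (div_ne_zero hz hn), hinv, Real.cosh_eq, Real.sinh_eq]
  generalize (‖z‖ : ℂ) = r at hn ⊢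
  conv_lhs => rw [← re_add_im z]
  rw [map_add, map_mul, conj_ofReal, conj_ofReal, conj_I]
  push_cast
  field_simp
  ring

lemma tendsto_sinh_mul_self_div {φ : ℝ → ℝ} (hφ : ContinuousAt φ 0) :
    Tendsto (fun ξ => Real.sinh (ξ * φ ξ) / ξ) (𝓝[≠] 0) (𝓝 (φ 0)) := by
  have hA : HasDerivAt (fun ξ => ξ * φ ξ) (φ 0) 0 := by
    rw [hasDerivAt_iff_tendsto_slope]
    refine (hφ.tendsto.mono_left nhdsWithin_le_nhds).congr' ?_
    filter_upwards [self_mem_nhdsWithin] with ξ hξ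
    simp [slope_def_field, mul_div_cancel_left₀ _ (hξ : ξ ≠ 0)]
  have hsinh := (Real.hasDerivAt_sinh _).comp 0 hA
  simp only [zero_mul, Real.cosh_zero, one_mul] at hsinh
  refine (hasDerivAt_iff_tendsto_slope.mp hsinh).congr fun ξ => ?_
  simp [slope_def_field]

lemma one_soliton_eq_desingularized {ξ : ℝ} (hξ : ξ ≠ 0) (η A T : ℝ) (c₁ c₂ : ℂ) :
    2 * I * ξ * η * c₂ / ((ξ + I * η) ^ 2 * (ξ - I * η) * c₁) *
        exp (2 * I * T + log ((ξ + I * η) / (√(ξ ^ 2 + η ^ 2) : ℝ))) *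
        (cosh (A + log ((ξ + I * η) / (√(ξ ^ 2 + η ^ 2) : ℝ))))⁻¹
      = 2 * I * η * c₂ / c₁ * (exp (2 * I * T) /
          ((ξ ^ 2 + η ^ 2) * (Real.cosh A + I * η * (Real.sinh A / ξ : ℝ)))) := by
  set z : ℂ := ξ + I * η with hz_def
  have hre : z.re = ξ := by simp [hz_def]
  have him : z.im = η := by simp [hz_def]
  have hξ' : (ξ : ℂ) ≠ 0 := by exact_mod_cast hξ
  have hz : z ≠ 0 := fun h => hξ (by rw [← hre, h, zero_re])
  have hzb : (ξ - I * η : ℂ) ≠ 0 := fun h => hξ (by simpa using congrArg re h)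
  have hn : (‖z‖ : ℂ) ≠ 0 := by exact_mod_cast norm_ne_zero_iff.mpr hz
  have hnorm : ‖z‖ = √(ξ ^ 2 + η ^ 2) := by rw [hz_def, mul_comm I, norm_add_mul_I]
  have hzz : (ξ - I * η) * z = ξ ^ 2 + η ^ 2 := by
    rw [hz_def]; linear_combination (-(η : ℂ) ^ 2) * I_sq
  set D : ℂ := Real.cosh A + I * η * (Real.sinh A / ξ : ℝ)
  have hcosh : cosh (A + log (z / ‖z‖)) = ξ * D / ‖z‖ := by
    rw [cosh_add_log_div_norm A hz, hre, him]
    simp only [D]; push_cast; field_simp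
  rw [← hnorm, Complex.exp_add, exp_log (div_ne_zero hz hn), hcosh, ← hzz]
  field_simp

lemma tendsto_desingularized_one_soliton {η : ℝ} {T φ : ℝ → ℝ} (hT : ContinuousAt T 0)
    (hφ : ContinuousAt φ 0) (h0 : (η : ℂ) ^ 2 * (1 + I * η * φ 0) ≠ 0) :
    Tendsto (fun ξ : ℝ => exp (2 * I * T ξ) /
        ((ξ ^ 2 + η ^ 2) * (Real.cosh (ξ * φ ξ) + I * η * (Real.sinh (ξ * φ ξ) / ξ : ℝ))))
      (𝓝[≠] 0) (𝓝 (exp (2 * I * T 0) / (η ^ 2 * (1 + I * η * φ 0)))) := by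
  have hnum : ContinuousAt (fun ξ : ℝ => exp (2 * I * T ξ)) 0 := by fun_prop
  have hsq : ContinuousAt (fun ξ : ℝ => (ξ : ℂ) ^ 2 + η ^ 2) 0 := by fun_prop
  have hcosh : ContinuousAt (fun ξ => Real.cosh (ξ * φ ξ)) 0 := by fun_prop
  have hden := (hsq.tendsto.mono_left nhdsWithin_le_nhds).mul
    ((hcosh.tendsto.mono_left nhdsWithin_le_nhds).ofReal.add
      ((tendsto_const_nhds (x := I * η)).mul (tendsto_sinh_mul_self_div hφ).ofReal))
  convert (hnum.tendsto.mono_left nhdsWithin_le_nhds).div hden (by simpa using h0) using 2 <;> simp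

lemma two_mul_sq_rpow {η : ℝ} (hη : η ≠ 0) (ε : ℝ) :
    (2 * η ^ 2) ^ (2 * ε) = 2 * 2 ^ (2 * ε - 1) * (η ^ 2) ^ (2 * ε - 2) * η ^ 4 := by
  have h2 : (2 : ℝ) ^ (2 * ε) = 2 * 2 ^ (2 * ε - 1) := by
    rw [Real.rpow_sub_one two_ne_zero]; ring
  have hη2 : (η ^ 2) ^ (2 * ε) = (η ^ 2) ^ (2 * ε - 2) * η ^ 4 := by
    rw [show 2 * ε = 2 * ε - 2 + (2 : ℕ) by push_cast; ring, Real.rpow_add_natCast (by positivity)]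
    ring_nf
  rw [Real.mul_rpow zero_le_two (sq_nonneg η), h2, hη2]; ring

lemma two_mul_sq_rpow_sub_one {η : ℝ} (hη : η ≠ 0) (ε : ℝ) :
    (2 * η ^ 2) ^ (2 * ε - 1) = 2 * 4 ^ (ε - 1) * η ^ 2 * (η ^ 2) ^ (2 * ε - 2) := by
  have h4 : (4 : ℝ) ^ (ε - 1) = 2 ^ (2 * ε - 2) := by
    rw [show (4 : ℝ) = 2 ^ (2 : ℕ) by norm_num, ← Real.rpow_natCast_mul zero_le_two]
    ring_nf
  have h2 : (2 : ℝ) ^ (2 * ε - 1) = 2 * 2 ^ (2 * ε - 2) := by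
    rw [show 2 * ε - 1 = 2 * ε - 2 + 1 by ring, Real.rpow_add_one two_ne_zero]; ring
  have hη2 : (η ^ 2) ^ (2 * ε - 1) = η ^ 2 * (η ^ 2) ^ (2 * ε - 2) := by
    rw [show 2 * ε - 1 = 2 * ε - 2 + 1 by ring, Real.rpow_add_one (by positivity)]; ring
  rw [Real.mul_rpow zero_le_two (sq_nonneg η), h2, hη2, h4]; ring

theorem rational_limit_of_one_soliton_general (eta eps : ℝ) (heta : 0 < eta)
    (nu11 nu21 : ℂ)
    (hnu21 : nu21 ≠ 0) (hmod : ‖nu11‖ = ‖nu21‖) (x t : ℝ)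
    (hden : (4 * I * (eta ^ 4 : ℝ) * (x : ℂ) +
        I * (((2 * eta ^ 2) ^ (2 * eps) : ℝ) : ℂ) * (t : ℂ) + (eta ^ 2 : ℝ)) ≠ 0) :
    Tendsto (fun xi : ℝ =>
        (2 * I * (xi : ℂ) * (eta : ℂ) * starRingEnd ℂ nu21) /
            (((xi : ℂ) + I * eta) ^ 2 * ((xi : ℂ) - I * eta) * starRingEnd ℂ nu11) *
          Complex.exp (2 * I *
              ((-(xi ^ 2 - eta ^ 2) * x +
                (4 : ℝ) ^ (eps - 1) * (xi ^ 2 - eta ^ 2) *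
                  (xi ^ 2 + eta ^ 2) ^ (2 * eps - 2) * t : ℝ) : ℂ) +
            Complex.log (((xi : ℂ) + I * eta) * (‖nu11‖ : ℝ) /
              ((Real.sqrt (xi ^ 2 + eta ^ 2) : ℝ) * (‖nu21‖ : ℝ)))) *
          (Complex.cosh
            (2 * ((2 * xi * eta * x +
                (2 : ℝ) ^ (2 * eps - 1) * xi * eta *
                  (xi ^ 2 + eta ^ 2) ^ (2 * eps - 2) * t : ℝ) : ℂ) +
              Complex.log (((xi : ℂ) + I * eta) * (‖nu11‖ : ℝ) /
                ((Real.sqrt (xi ^ 2 + eta ^ 2) : ℝ) * (‖nu21‖ : ℝ)))))⁻¹)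
      (nhdsWithin 0 (Set.Ioi 0))
      (nhds (2 * I * (eta : ℂ) * starRingEnd ℂ nu21 *
          Complex.exp (2 * I * (eta ^ 2 : ℝ) * (x : ℂ) -
            I * (((2 * eta ^ 2) ^ (2 * eps - 1) : ℝ) : ℂ) * (t : ℂ)) /
        (starRingEnd ℂ nu11 *
          (4 * I * (eta ^ 4 : ℝ) * (x : ℂ) +
            I * (((2 * eta ^ 2) ^ (2 * eps) : ℝ) : ℂ) * (t : ℂ) + (eta ^ 2 : ℝ))))) := by
  -- `T = θ_{1I}` and `ξ * φ ξ = 2 θ_{1R}`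
  set T : ℝ → ℝ := fun ξ => -(ξ ^ 2 - eta ^ 2) * x +
    (4 : ℝ) ^ (eps - 1) * (ξ ^ 2 - eta ^ 2) * (ξ ^ 2 + eta ^ 2) ^ (2 * eps - 2) * t
  set φ : ℝ → ℝ := fun ξ => 4 * eta * x +
    2 * (2 : ℝ) ^ (2 * eps - 1) * eta * (ξ ^ 2 + eta ^ 2) ^ (2 * eps - 2) * t
  have hR : ContinuousAt (fun ξ : ℝ => (ξ ^ 2 + eta ^ 2) ^ (2 * eps - 2)) 0 :=
    (by fun_prop : ContinuousAt (fun ξ : ℝ => ξ ^ 2 + eta ^ 2) 0).rpow_const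
      (Or.inl (by positivity))
  have hT : ContinuousAt T 0 := by fun_prop
  have hφ : ContinuousAt φ 0 := by fun_prop
  have h00 : (0 : ℝ) ^ 2 + eta ^ 2 = eta ^ 2 := by ring
  have hT0 : 2 * I * (T 0 : ℂ) = 2 * I * (eta ^ 2 : ℝ) * (x : ℂ) -
      I * (((2 * eta ^ 2) ^ (2 * eps - 1) : ℝ) : ℂ) * (t : ℂ) := by
    simp only [T, h00, two_mul_sq_rpow_sub_one heta.ne' eps]; push_cast; ring
  have hφ0 : (eta : ℂ) ^ 2 * (1 + I * eta * φ 0) = 4 * I * (eta ^ 4 : ℝ) * (x : ℂ) +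
      I * (((2 * eta ^ 2) ^ (2 * eps) : ℝ) : ℂ) * (t : ℂ) + (eta ^ 2 : ℝ) := by
    simp only [φ, h00, two_mul_sq_rpow heta.ne' eps]; push_cast; ring
  have hlim := ((tendsto_desingularized_one_soliton hT hφ (hφ0 ▸ hden)).const_mul
    (2 * I * eta * starRingEnd ℂ nu21 / starRingEnd ℂ nu11)).mono_left
    (nhdsWithin_mono (0 : ℝ) fun _ h => ne_of_gt h : 𝓝[>] (0 : ℝ) ≤ 𝓝[≠] 0)
  rw [hT0, hφ0] at hlim
  have hlog : ∀ ξ : ℝ, ((ξ : ℂ) + I * eta) * (‖nu11‖ : ℝ) /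
      ((√(ξ ^ 2 + eta ^ 2) : ℝ) * (‖nu21‖ : ℝ)) = (ξ + I * eta) / (√(ξ ^ 2 + eta ^ 2) : ℝ) :=
    fun ξ => by rw [hmod, mul_div_mul_right _ _ (by exact_mod_cast norm_ne_zero_iff.mpr hnu21)]
  convert hlim.congr' ?_ using 2
  · exact (div_mul_div_comm _ _ _ _).symm
  filter_upwards [self_mem_nhdsWithin] with ξ (hξ : 0 < ξ)
  have hA : 2 * (((2 * ξ * eta * x + (2 : ℝ) ^ (2 * eps - 1) * ξ * eta *
      (ξ ^ 2 + eta ^ 2) ^ (2 * eps - 2) * t : ℝ)) : ℂ) = ((ξ * φ ξ : ℝ) : ℂ) := by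
    simp only [φ]; push_cast; ring
  rw [hlog, hA]
  exact (one_soliton_eq_desingularized hξ.ne' _ _ _ _ _).symm

/-- The fractional rational solution is the pointwise limit as `ξ → 0⁺` of the
fractional one-soliton solution (with `|ν₁₁| = |ν₂₁|`). -/
theorem rational_limit_of_one_soliton (eta eps : ℝ) (heta : 0 < eta)
    (heps : eps ∈ Set.Ico (0 : ℝ) 1) (nu11 nu21 : ℂ) (hnu11 : nu11 ≠ 0)
    (hnu21 : nu21 ≠ 0) (hmod : ‖nu11‖ = ‖nu21‖) (x t : ℝ)
    (hden : (4 * I * (eta ^ 4 : ℝ) * (x : ℂ) +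
        I * (((2 * eta ^ 2) ^ (2 * eps) : ℝ) : ℂ) * (t : ℂ) + (eta ^ 2 : ℝ)) ≠ 0) :
    Tendsto (fun xi : ℝ =>
        (2 * I * (xi : ℂ) * (eta : ℂ) * starRingEnd ℂ nu21) /
            (((xi : ℂ) + I * eta) ^ 2 * ((xi : ℂ) - I * eta) * starRingEnd ℂ nu11) *
          Complex.exp (2 * I *
              ((-(xi ^ 2 - eta ^ 2) * x +
                (4 : ℝ) ^ (eps - 1) * (xi ^ 2 - eta ^ 2) *
                  (xi ^ 2 + eta ^ 2) ^ (2 * eps - 2) * t : ℝ) : ℂ) +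
            Complex.log (((xi : ℂ) + I * eta) * (‖nu11‖ : ℝ) /
              ((Real.sqrt (xi ^ 2 + eta ^ 2) : ℝ) * (‖nu21‖ : ℝ)))) *
          (Complex.cosh
            (2 * ((2 * xi * eta * x +
                (2 : ℝ) ^ (2 * eps - 1) * xi * eta *
                  (xi ^ 2 + eta ^ 2) ^ (2 * eps - 2) * t : ℝ) : ℂ) +
              Complex.log (((xi : ℂ) + I * eta) * (‖nu11‖ : ℝ) /
                ((Real.sqrt (xi ^ 2 + eta ^ 2) : ℝ) * (‖nu21‖ : ℝ)))))⁻¹)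
      (nhdsWithin 0 (Set.Ioi 0))
      (nhds (2 * I * (eta : ℂ) * starRingEnd ℂ nu21 *
          Complex.exp (2 * I * (eta ^ 2 : ℝ) * (x : ℂ) -
            I * (((2 * eta ^ 2) ^ (2 * eps - 1) : ℝ) : ℂ) * (t : ℂ)) /
        (starRingEnd ℂ nu11 *
          (4 * I * (eta ^ 4 : ℝ) * (x : ℂ) +
            I * (((2 * eta ^ 2) ^ (2 * eps) : ℝ) : ℂ) * (t : ℂ) + (eta ^ 2 : ℝ))))) :=
  rational_limit_of_one_soliton_general eta eps heta nu11 nu21 hnu21 hmod x t hden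
end

section
/- For the function h(z) = e^{iαz}(λ⁴ sech(z - iϖ) + (ξ²+η²)² cosh(z-iϖ) sech²(z+iϖ) - 2λ²(ξ²+η²) sech(z+iϖ) + (4ξ²η²λ²/(ξ²+η²)) sech(z+iϖ) sech²(z-iϖ)) with α = (λ²-ξ²+η²)/(2ξη), ϖ = arctan(η/ξ), and λ = ξ+iη, the residues of h at its poles z = iϖ + iπ/2 and z = -iϖ + iπ/2 are both zero. -/
/-!
At a pole `p` with `cosh (p - w) = 0`, the integrand is `g · sech² (· - w)` with `g` holomorphic
near `p`. Since `sech² = tanh'`, integrating by parts leaves `∮ g' · tanh (· - w)`, and the simple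
pole of `tanh (· - w)` at `p` is removable as soon as `g' p = 0`. The derivative `g' p` is computed
from `cosh` and `sinh` at `iπ/2 ± 2iϖ`, i.e. from `sin 2ϖ = 2ξη / (ξ² + η²)` and
`cos 2ϖ = (ξ² - η²) / (ξ² + η²)`; with the given `α`, `iα sin 2ϖ + i cos 2ϖ = iλ² / (ξ² + η²)`,
and both derivatives vanish identically.
-/

open Complex Real Metric Filter Topology

theorem Filter.Eventually.forall_mem_sphere {α : Type*} [PseudoMetricSpace α] {p : α → Prop}
    {c : α} (h : ∀ᶠ z in 𝓝[≠] c, p z) : ∀ᶠ ρ in 𝓝[>] (0 : ℝ), ∀ z ∈ sphere c ρ, p z := by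
  obtain ⟨ε, hε, hball⟩ := Metric.eventually_nhds_iff_ball.mp (eventually_nhdsWithin_iff.mp h)
  filter_upwards [Ioo_mem_nhdsGT hε] with ρ hρ z hz
  exact hball z (by rw [mem_ball, mem_sphere.mp hz]; exact hρ.2) (ne_of_mem_sphere hz hρ.1.ne')

theorem eventually_circleIntegral_congr {E : Type*} [NormedAddCommGroup E] [NormedSpace ℂ E]
    {f g : ℂ → E} {c : ℂ} (h : f =ᶠ[𝓝[≠] c] g) :
    ∀ᶠ ρ in 𝓝[>] (0 : ℝ), ∮ z in C(c, ρ), f z = ∮ z in C(c, ρ), g z := by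
  filter_upwards [h.forall_mem_sphere, self_mem_nhdsWithin] with ρ hfg hρ
  exact circleIntegral.integral_congr (le_of_lt hρ) hfg

theorem AnalyticAt.eventually_circleIntegral_eq_zero {E : Type*} [NormedAddCommGroup E]
    [NormedSpace ℂ E] [CompleteSpace E] {f : ℂ → E} {c : ℂ} (hf : AnalyticAt ℂ f c) :
    ∀ᶠ ρ in 𝓝[>] (0 : ℝ), ∮ z in C(c, ρ), f z = 0 := by
  obtain ⟨r, hr, hball⟩ := hf.exists_ball_analyticOnNhd
  filter_upwards [Ioo_mem_nhdsGT hr] with ρ hρ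
  exact (hball.differentiableOn.diffContOnCl_ball (closedBall_subset_ball hρ.2))
    |>.circleIntegral_eq_zero hρ.1.le

theorem AnalyticAt.dslope {f : ℂ → ℂ} {c : ℂ} (hf : AnalyticAt ℂ f c) :
    AnalyticAt ℂ (dslope f c) c := by
  obtain ⟨r, hr, hball⟩ := hf.exists_ball_analyticOnNhd
  have hnhds : ball c r ∈ 𝓝 c := ball_mem_nhds c hr
  exact ((differentiableOn_dslope hnhds).mpr hball.differentiableOn).analyticAt hnhds

theorem eventually_circleIntegral_div_eq_zero {F q : ℂ → ℂ} {c : ℂ} (hF : AnalyticAt ℂ F c)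
    (hq : AnalyticAt ℂ q c) (hFc : F c = 0) (hqc : q c = 0) (hq' : deriv q c ≠ 0) :
    ∀ᶠ ρ in 𝓝[>] (0 : ℝ), ∮ z in C(c, ρ), F z / q z = 0 := by
  have hψ : AnalyticAt ℂ (fun z => dslope F c z / dslope q c z) c :=
    hF.dslope.div hq.dslope (by rwa [dslope_same])
  have heq : (fun z => F z / q z) =ᶠ[𝓝[≠] c] fun z => dslope F c z / dslope q c z := by
    filter_upwards [self_mem_nhdsWithin] with z hz
    rw [dslope_of_ne _ hz, dslope_of_ne _ hz, slope_def_field, slope_def_field, hFc, hqc,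
      sub_zero, sub_zero, div_div_div_cancel_right₀ (sub_ne_zero.mpr hz)]
  filter_upwards [eventually_circleIntegral_congr heq, hψ.eventually_circleIntegral_eq_zero]
    with ρ h₁ h₂
  exact h₁.trans h₂

theorem hasDerivAt_exp_mul (β z : ℂ) :
    HasDerivAt (fun z => exp (β * z)) (exp (β * z) * β) z := by
  simpa using ((hasDerivAt_id z).const_mul β).cexp

theorem hasDerivAt_cosh_sub (w z : ℂ) :
    HasDerivAt (fun z => cosh (z - w)) (sinh (z - w)) z := by
  simpa using ((hasDerivAt_id z).sub_const w).ccosh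

theorem hasDerivAt_cosh_add (w z : ℂ) :
    HasDerivAt (fun z => cosh (z + w)) (sinh (z + w)) z := by
  simpa using ((hasDerivAt_id z).add_const w).ccosh

theorem hasDerivAt_sinh_sub (w z : ℂ) :
    HasDerivAt (fun z => sinh (z - w)) (cosh (z - w)) z := by
  simpa using ((hasDerivAt_id z).sub_const w).csinh

theorem Complex.sinh_ne_zero_of_cosh_eq_zero {z : ℂ} (hz : cosh z = 0) : sinh z ≠ 0 := by
  intro hs
  simpa [hz, hs] using Complex.cosh_sq_sub_sinh_sq z

theorem eventually_cosh_sub_ne_zero {c w : ℂ} (hc : cosh (c - w) = 0) :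
    ∀ᶠ z in 𝓝[≠] c, cosh (z - w) ≠ 0 := by
  simpa [hc] using (hasDerivAt_cosh_sub w c).eventually_ne (sinh_ne_zero_of_cosh_eq_zero hc)

theorem eventually_circleIntegral_mul_inv_cosh_sub_sq_eq_zero {g : ℂ → ℂ} {c w : ℂ}
    (hg : AnalyticAt ℂ g c) (hc : cosh (c - w) = 0) (hg' : deriv g c = 0) :
    ∀ᶠ ρ in 𝓝[>] (0 : ℝ), ∮ z in C(c, ρ), g z * (cosh (z - w))⁻¹ ^ 2 = 0 := by
  have htanh : ∀ᶠ ρ in 𝓝[>] (0 : ℝ),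
      ∮ z in C(c, ρ), deriv g z * sinh (z - w) / cosh (z - w) = 0 :=
    eventually_circleIntegral_div_eq_zero (by fun_prop) (by fun_prop) (by simp [hg'])
      hc (by rw [(hasDerivAt_cosh_sub w c).deriv]; exact sinh_ne_zero_of_cosh_eq_zero hc)
  have hsphere := ((eventually_nhdsWithin_of_eventually_nhds hg.eventually_analyticAt).and
    (eventually_cosh_sub_ne_zero hc)).forall_mem_sphere
  filter_upwards [htanh, hsphere, self_mem_nhdsWithin] with ρ htanh hsphere hρ
  have hderiv : ∀ z ∈ sphere c ρ, HasDerivAt (fun z => g z * sinh (z - w) / cosh (z - w))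
      (deriv g z * sinh (z - w) / cosh (z - w) + g z * (cosh (z - w))⁻¹ ^ 2) z := by
    intro z hz
    obtain ⟨hgz, hcz⟩ := hsphere z hz
    refine ((hgz.differentiableAt.hasDerivAt.fun_mul (hasDerivAt_sinh_sub w z)).fun_div
      (hasDerivAt_cosh_sub w z) hcz).congr_deriv ?_
    field_simp
    linear_combination g z * Complex.cosh_sq_sub_sinh_sq (z - w)
  have hint : ∀ f : ℂ → ℂ, (∀ z ∈ sphere c ρ, ContinuousAt f z) → CircleIntegrable f c ρ :=
    fun f hf => ContinuousOn.circleIntegrable hρ.le (continuousOn_of_forall_continuousAt hf)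
  have hsum := circleIntegral.integral_eq_zero_of_hasDerivWithinAt hρ.le
    fun z hz => (hderiv z hz).hasDerivWithinAt
  rwa [circleIntegral.integral_add (hint _ fun z hz => ?_) (hint _ fun z hz => ?_),
    htanh, zero_add] at hsum
  all_goals
    obtain ⟨hgz, hcz⟩ := hsphere z hz
    have := hgz.deriv.continuousAt
    have := hgz.continuousAt
    fun_prop (disch := exact hcz)

/-- The paper's `h` is `sechIntegrand (iα) λ⁴ (ξ² + η²)² (2λ²(ξ² + η²)) (4ξ²η²λ²/(ξ² + η²)) ϖ`. -/
noncomputable def sechIntegrand (β a b c d ϖ : ℂ) (z : ℂ) : ℂ :=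
  exp (β * z) * (a * (cosh (z - I * ϖ))⁻¹ + b * cosh (z - I * ϖ) * (cosh (z + I * ϖ))⁻¹ ^ 2 -
    c * (cosh (z + I * ϖ))⁻¹ + d * (cosh (z + I * ϖ))⁻¹ * (cosh (z - I * ϖ))⁻¹ ^ 2)

-- In both pole lemmas, `hres` is `deriv g p = 0`, cleared of denominators, for the `g`
-- holomorphic at the pole `p` with `sechIntegrand β a b c d ϖ = g · sech² (· - w)` near `p`.
theorem eventually_circleIntegral_sechIntegrand_eq_zero_at_sub_pole {β a b c d ϖ : ℂ}
    (hS : sin (2 * ϖ) ≠ 0)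
    (hres : I * a * sin (2 * ϖ) ^ 2 = d * (β * sin (2 * ϖ) + I * cos (2 * ϖ))) :
    ∀ᶠ ρ in 𝓝[>] (0 : ℝ), ∮ z in C(I * ϖ + I * (π / 2), ρ), sechIntegrand β a b c d ϖ z = 0 := by
  set p := I * ϖ + I * (π / 2)
  have hsub : p - I * ϖ = (π / 2 : ℂ) * I := by ring
  have hadd : p + I * ϖ = (2 * ϖ + π / 2) * I := by ring
  have hu : cosh (p - I * ϖ) = 0 := by rw [hsub, Complex.cosh_mul_I, Complex.cos_pi_div_two]
  have hu' : sinh (p - I * ϖ) = I := by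
    rw [hsub, Complex.sinh_mul_I, Complex.sin_pi_div_two, one_mul]
  have hv : cosh (p + I * ϖ) = -sin (2 * ϖ) := by
    rw [hadd, Complex.cosh_mul_I, Complex.cos_add_pi_div_two]
  have hv' : sinh (p + I * ϖ) = cos (2 * ϖ) * I := by
    rw [hadd, Complex.sinh_mul_I, Complex.sin_add_pi_div_two]
  have hv₀ : cosh (p + I * ϖ) ≠ 0 := by rw [hv]; exact neg_ne_zero.mpr hS
  set P := fun z => a + b * cosh (z - I * ϖ) ^ 2 * (cosh (z + I * ϖ))⁻¹ ^ 2 -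
    c * cosh (z - I * ϖ) * (cosh (z + I * ϖ))⁻¹
  set g := fun z => exp (β * z) * (cosh (z - I * ϖ) * P z + d * (cosh (z + I * ϖ))⁻¹)
  have hg : AnalyticAt ℂ g p := by fun_prop (disch := exact hv₀)
  have hP : DifferentiableAt ℂ P p := by fun_prop (disch := exact hv₀)
  have hgd : HasDerivAt g _ p := (hasDerivAt_exp_mul β p).fun_mul
    (((hasDerivAt_cosh_sub _ p).fun_mul hP.hasDerivAt).add
      (((hasDerivAt_cosh_add _ p).fun_inv hv₀).const_mul d))
  have hg' : deriv g p = 0 := by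
    simp only [hgd.deriv, P, hu, hu', hv, hv']
    field_simp
    linear_combination exp (β * p) * hres
  have heq : sechIntegrand β a b c d ϖ =ᶠ[𝓝[≠] p] fun z => g z * (cosh (z - I * ϖ))⁻¹ ^ 2 := by
    filter_upwards [eventually_cosh_sub_ne_zero hu] with z hz
    simp only [sechIntegrand, g, P]
    field_simp
  filter_upwards [eventually_circleIntegral_congr heq,
    eventually_circleIntegral_mul_inv_cosh_sub_sq_eq_zero hg hu hg'] with ρ h₁ h₂
  exact h₁.trans h₂

theorem eventually_circleIntegral_sechIntegrand_eq_zero_at_add_pole {β a b c d ϖ : ℂ}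
    (hS : sin (2 * ϖ) ≠ 0)
    (hres : b * (β * sin (2 * ϖ) + I * cos (2 * ϖ)) * sin (2 * ϖ) ^ 2 + I * d =
      I * c * sin (2 * ϖ) ^ 2) :
    ∀ᶠ ρ in 𝓝[>] (0 : ℝ),
      ∮ z in C(-(I * ϖ) + I * (π / 2), ρ), sechIntegrand β a b c d ϖ z = 0 := by
  set p := -(I * ϖ) + I * (π / 2)
  have hadd : p + I * ϖ = (π / 2 : ℂ) * I := by ring
  have hsub : p - I * ϖ = (π / 2 - 2 * ϖ) * I := by ring
  have hv : cosh (p + I * ϖ) = 0 := by rw [hadd, Complex.cosh_mul_I, Complex.cos_pi_div_two]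
  have hpole : cosh (p - -(I * ϖ)) = 0 := by rwa [sub_neg_eq_add]
  have hv' : sinh (p + I * ϖ) = I := by
    rw [hadd, Complex.sinh_mul_I, Complex.sin_pi_div_two, one_mul]
  have hu : cosh (p - I * ϖ) = sin (2 * ϖ) := by
    rw [hsub, Complex.cosh_mul_I, Complex.cos_pi_div_two_sub]
  have hu' : sinh (p - I * ϖ) = cos (2 * ϖ) * I := by
    rw [hsub, Complex.sinh_mul_I, Complex.sin_pi_div_two_sub]
  have hu₀ : cosh (p - I * ϖ) ≠ 0 := hu ▸ hS
  set P := fun z => a * cosh (z + I * ϖ) * (cosh (z - I * ϖ))⁻¹ - c +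
    d * (cosh (z - I * ϖ))⁻¹ ^ 2
  set g := fun z => exp (β * z) * (cosh (z + I * ϖ) * P z + b * cosh (z - I * ϖ))
  have hg : AnalyticAt ℂ g p := by fun_prop (disch := exact hu₀)
  have hP : DifferentiableAt ℂ P p := by fun_prop (disch := exact hu₀)
  have hgd : HasDerivAt g _ p := (hasDerivAt_exp_mul β p).fun_mul
    (((hasDerivAt_cosh_add _ p).fun_mul hP.hasDerivAt).add
      ((hasDerivAt_cosh_sub _ p).const_mul b))
  have hg' : deriv g p = 0 := by
    simp only [hgd.deriv, P, hu, hu', hv, hv']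
    field_simp
    linear_combination exp (β * p) * hres
  have heq : sechIntegrand β a b c d ϖ =ᶠ[𝓝[≠] p]
      fun z => g z * (cosh (z - -(I * ϖ)))⁻¹ ^ 2 := by
    filter_upwards [eventually_cosh_sub_ne_zero hpole, eventually_nhdsWithin_of_eventually_nhds
      ((hasDerivAt_cosh_sub _ p).continuousAt.eventually_ne hu₀)] with z hvz huz
    rw [sub_neg_eq_add] at hvz ⊢
    simp only [sechIntegrand, g, P]
    field_simp
    ring
  filter_upwards [eventually_circleIntegral_congr heq,
    eventually_circleIntegral_mul_inv_cosh_sub_sq_eq_zero hg hpole hg'] with ρ h₁ h₂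
  exact h₁.trans h₂

theorem Real.sin_two_mul_arctan_div {x : ℝ} (hx : x ≠ 0) (y : ℝ) :
    sin (2 * arctan (y / x)) = 2 * x * y / (x ^ 2 + y ^ 2) := by
  rw [Real.sin_two_mul, Real.sin_arctan, Real.cos_arctan]
  field_simp
  rw [Real.sq_sqrt (by positivity)]
  field_simp

theorem Real.cos_two_mul_arctan_div {x : ℝ} (hx : x ≠ 0) (y : ℝ) :
    cos (2 * arctan (y / x)) = (x ^ 2 - y ^ 2) / (x ^ 2 + y ^ 2) := by
  rw [Real.cos_two_mul, Real.cos_sq_arctan]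
  field_simp
  ring

theorem residues_vanish_general (xi eta : ℝ) (hxi : 0 < xi) (heta : 0 < eta)
    (lam : ℂ)
    (alpha : ℂ) (halpha : alpha = (lam ^ 2 - (xi ^ 2 : ℝ) + (eta ^ 2 : ℝ)) / (2 * xi * eta))
    (vpi : ℝ) (hvpi : vpi = Real.arctan (eta / xi))
    (h : ℂ → ℂ)
    (hh : ∀ z : ℂ, h z = Complex.exp (I * alpha * z) *
        (lam ^ 4 * (Complex.cosh (z - I * vpi))⁻¹ +
          ((xi ^ 2 + eta ^ 2 : ℝ) : ℂ) ^ 2 * Complex.cosh (z - I * vpi) *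
            ((Complex.cosh (z + I * vpi))⁻¹) ^ 2 -
          2 * lam ^ 2 * ((xi ^ 2 + eta ^ 2 : ℝ) : ℂ) * (Complex.cosh (z + I * vpi))⁻¹ +
          (4 * (xi ^ 2 : ℝ) * (eta ^ 2 : ℝ) / ((xi ^ 2 + eta ^ 2 : ℝ) : ℂ)) * lam ^ 2 *
            (Complex.cosh (z + I * vpi))⁻¹ * ((Complex.cosh (z - I * vpi))⁻¹) ^ 2)) :
    ∃ r : ℝ, 0 < r ∧ ∀ ρ : ℝ, 0 < ρ → ρ < r →
      circleIntegral h (I * vpi + I * (π / 2)) ρ = 0 ∧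
      circleIntegral h (-(I * vpi) + I * (π / 2)) ρ = 0 := by
  have hS : Complex.sin (2 * vpi) = 2 * xi * eta / (xi ^ 2 + eta ^ 2) := by
    rw [hvpi]
    exact_mod_cast Real.sin_two_mul_arctan_div hxi.ne' eta
  have hC : Complex.cos (2 * vpi) = (xi ^ 2 - eta ^ 2) / (xi ^ 2 + eta ^ 2) := by
    rw [hvpi]
    exact_mod_cast Real.cos_two_mul_arctan_div hxi.ne' eta
  have hS₀ : Complex.sin (2 * vpi) ≠ 0 := by
    rw [hS]
    exact_mod_cast (by positivity : 2 * xi * eta / (xi ^ 2 + eta ^ 2) ≠ 0)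
  have hxi₀ : (xi : ℂ) ≠ 0 := by exact_mod_cast hxi.ne'
  have heta₀ : (eta : ℂ) ≠ 0 := by exact_mod_cast heta.ne'
  have hω : I * alpha * Complex.sin (2 * vpi) + I * Complex.cos (2 * vpi) =
      I * lam ^ 2 / (xi ^ 2 + eta ^ 2) := by
    rw [halpha, hS, hC]
    push_cast
    field_simp
    ring
  suffices H : ∀ᶠ ρ in 𝓝[>] (0 : ℝ), circleIntegral h (I * vpi + I * (π / 2)) ρ = 0 ∧
      circleIntegral h (-(I * vpi) + I * (π / 2)) ρ = 0 by
    obtain ⟨r, hr, hsub⟩ := mem_nhdsGT_iff_exists_Ioo_subset.mp H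
    exact ⟨r, hr, fun ρ hρ hρr => hsub ⟨hρ, hρr⟩⟩
  rw [show h = sechIntegrand (I * alpha) _ _ _ _ vpi from funext hh]
  refine (eventually_circleIntegral_sechIntegrand_eq_zero_at_sub_pole hS₀ ?_).and
    (eventually_circleIntegral_sechIntegrand_eq_zero_at_add_pole hS₀ ?_) <;>
  · rw [hω, hS]
    push_cast
    field_simp
    ring

/-- The residues of the integrand `h₁` at its poles `z = ±iϖ + iπ/2` vanish:
the circle integrals of `h` around small circles centered at these poles are zero. -/
theorem residues_vanish (xi eta : ℝ) (hxi : 0 < xi) (heta : 0 < eta)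
    (lam : ℂ) (hlam : lam = (xi : ℂ) + I * eta)
    (alpha : ℂ) (halpha : alpha = (lam ^ 2 - (xi ^ 2 : ℝ) + (eta ^ 2 : ℝ)) / (2 * xi * eta))
    (vpi : ℝ) (hvpi : vpi = Real.arctan (eta / xi))
    (h : ℂ → ℂ)
    (hh : ∀ z : ℂ, h z = Complex.exp (I * alpha * z) *
        (lam ^ 4 * (Complex.cosh (z - I * vpi))⁻¹ +
          ((xi ^ 2 + eta ^ 2 : ℝ) : ℂ) ^ 2 * Complex.cosh (z - I * vpi) *
            ((Complex.cosh (z + I * vpi))⁻¹) ^ 2 -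
          2 * lam ^ 2 * ((xi ^ 2 + eta ^ 2 : ℝ) : ℂ) * (Complex.cosh (z + I * vpi))⁻¹ +
          (4 * (xi ^ 2 : ℝ) * (eta ^ 2 : ℝ) / ((xi ^ 2 + eta ^ 2 : ℝ) : ℂ)) * lam ^ 2 *
            (Complex.cosh (z + I * vpi))⁻¹ * ((Complex.cosh (z - I * vpi))⁻¹) ^ 2)) :
    ∃ r : ℝ, 0 < r ∧ ∀ ρ : ℝ, 0 < ρ → ρ < r →
      circleIntegral h (I * vpi + I * (π / 2)) ρ = 0 ∧
      circleIntegral h (-(I * vpi) + I * (π / 2)) ρ = 0 :=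
  residues_vanish_general xi eta hxi heta lam alpha halpha vpi hvpi h hh
end
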